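/- arXiv:1804.04038 — 2 statements merged into one kernel-verified Lean document; each statement's English description precedes it below -/
import Mathlib

section
/- Effective resistance is a metric on the vertices of a finite connected graph: it is nonnegative, zero iff the vertices coincide, symmetric, and satisfies the triangle inequality. -/
/-!
With `L` the Laplacian, `L L†` is the orthogonal projection onto the complement of the constants,
so `φ = L† (1_u − 1_v)` is a potential with `L φ = 1_u − 1_v` and `R(u,v) = φᵀ L φ`. As `L` is
positive semidefinite, `R(u,v) ≥ 0` with equality only if `L φ = 0`, i.e. `u = v`. Splitting
`1_u − 1_x = (1_u − 1_v) + (1_v − 1_x)` writes `R(u,x) - R(u,v) - R(v,x)` as two potential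
differences, which are nonpositive by the minimum principle: a unit current from `s` to `t`
has its potential largest at `s` and smallest at `t`.
-/

open Matrix Finset

/-- `Ld` is the Moore–Penrose pseudoinverse of `L`. -/
def IsMoorePenrose {V : Type*} [Fintype V] (L Ld : Matrix V V ℝ) : Prop :=
  L * Ld * L = L ∧ Ld * L * Ld = Ld ∧ (L * Ld)ᵀ = L * Ld ∧ (Ld * L)ᵀ = Ld * L

/-- The Laplacian of the weighted graph with weights `w`. -/
def lapOf {V : Type*} [Fintype V] [DecidableEq V] (w : V → V → ℝ) : Matrix V V ℝ :=
  Matrix.of fun u v => if u = v then ∑ x, w u x else -(w u v)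

/-- Effective resistance `(1_u − 1_v)ᵀ Ld (1_u − 1_v)` w.r.t. a pseudoinverse `Ld`. -/
def effRes {V : Type*} [Fintype V] [DecidableEq V] (Ld : Matrix V V ℝ) (u v : V) : ℝ :=
  (Pi.single u (1 : ℝ) - Pi.single v 1) ⬝ᵥ
    Ld.mulVec (Pi.single u (1 : ℝ) - Pi.single v 1)

section UnitDiff

variable {V : Type*} [DecidableEq V]

def unitDiff (u v : V) : V → ℝ := Pi.single u 1 - Pi.single v 1

theorem sum_unitDiff [Fintype V] (u v : V) : ∑ i, unitDiff u v i = 0 := by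
  simp [unitDiff, sum_sub_distrib]

theorem unitDiff_dotProduct [Fintype V] (u v : V) (x : V → ℝ) :
    unitDiff u v ⬝ᵥ x = x u - x v := by
  simp [unitDiff, sub_dotProduct]

theorem unitDiff_add_unitDiff (u v x : V) : unitDiff u v + unitDiff v x = unitDiff u x :=
  sub_add_sub_cancel _ _ _

theorem unitDiff_swap (u v : V) : unitDiff v u = -unitDiff u v :=
  (neg_sub _ _).symm

theorem unitDiff_eq_zero_iff {u v : V} : unitDiff u v = 0 ↔ u = v := by
  refine ⟨fun h => ?_, fun h => by simp [unitDiff, h]⟩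
  by_contra huv
  simpa [unitDiff, huv] using congrFun h u

end UnitDiff

section Laplacian

variable {V : Type*} [Fintype V] [DecidableEq V] {w : V → V → ℝ}

theorem lapOf_mulVec_apply (hw_diag : ∀ u, w u u = 0) (x : V → ℝ) (u : V) :
    (lapOf w *ᵥ x) u = ∑ z, w u z * (x u - x z) := by
  have hentry : ∀ z, lapOf w u z = (if u = z then ∑ t, w u t else 0) - w u z := by
    intro z
    by_cases h : u = z
    · subst h; simp [lapOf, hw_diag]
    · simp [lapOf, h]
  simp only [mulVec, dotProduct, hentry, sub_mul, sum_sub_distrib, ite_mul, zero_mul,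
    sum_ite_eq, mem_univ, if_true, sum_mul, mul_sub]

theorem lapOf_isSymm (hw_sym : ∀ u v, w u v = w v u) : (lapOf w).IsSymm := by
  ext u v
  by_cases h : u = v
  · subst h; rfl
  · simp [lapOf, h, Ne.symm h, hw_sym u v]

theorem sum_lapOf_mulVec (hw_sym : ∀ u v, w u v = w v u) (hw_diag : ∀ u, w u u = 0)
    (x : V → ℝ) : ∑ u, (lapOf w *ᵥ x) u = 0 := by
  have hswap : ∑ u, ∑ z, w u z * (x u - x z) = ∑ u, ∑ z, w z u * (x z - x u) := sum_comm
  simp only [lapOf_mulVec_apply hw_diag]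
  have : ∑ u, ∑ z, w z u * (x z - x u) = -∑ u, ∑ z, w u z * (x u - x z) := by
    simp only [← sum_neg_distrib]
    exact sum_congr rfl fun u _ => sum_congr rfl fun z _ => by rw [hw_sym z u]; ring
  linarith

theorem two_mul_dotProduct_lapOf_mulVec (hw_sym : ∀ u v, w u v = w v u)
    (hw_diag : ∀ u, w u u = 0) (x : V → ℝ) :
    2 * (x ⬝ᵥ lapOf w *ᵥ x) = ∑ u, ∑ z, w u z * (x u - x z) ^ 2 := by
  have hQ : x ⬝ᵥ lapOf w *ᵥ x = ∑ u, ∑ z, w u z * (x u - x z) * x u := by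
    simp only [dotProduct, lapOf_mulVec_apply hw_diag, mul_comm (x _), sum_mul]
  have hQ' : x ⬝ᵥ lapOf w *ᵥ x = ∑ u, ∑ z, w u z * (x z - x u) * x z := by
    rw [hQ, sum_comm]
    simp only [hw_sym]
  rw [two_mul]
  nth_rewrite 1 [hQ]
  rw [hQ', ← sum_add_distrib]
  refine sum_congr rfl fun u _ => ?_
  rw [← sum_add_distrib]
  exact sum_congr rfl fun z _ => by ring

theorem posSemidef_lapOf (hw_sym : ∀ u v, w u v = w v u) (hw_nonneg : ∀ u v, 0 ≤ w u v)
    (hw_diag : ∀ u, w u u = 0) : (lapOf w).PosSemidef := by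
  refine .of_dotProduct_mulVec_nonneg ?_ fun x => ?_
  · simpa [IsHermitian, conjTranspose_eq_transpose_of_trivial] using (lapOf_isSymm hw_sym).eq
  · have h := two_mul_dotProduct_lapOf_mulVec hw_sym hw_diag x
    have : 0 ≤ ∑ u, ∑ z, w u z * (x u - x z) ^ 2 :=
      sum_nonneg fun u _ => sum_nonneg fun z _ => mul_nonneg (hw_nonneg u z) (sq_nonneg _)
    rw [star_trivial]
    linarith

/-- The indicator of `S` lies in the kernel of the Laplacian, hence is constant. -/
theorem eq_univ_of_nonempty_of_weight_closed (hw_sym : ∀ u v, w u v = w v u)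
    (hw_nonneg : ∀ u v, 0 ≤ w u v) (hw_diag : ∀ u, w u u = 0)
    (hconn : ∀ x : V → ℝ, lapOf w *ᵥ x = 0 → ∃ c, ∀ i, x i = c) {S : Set V}
    (hS : ∀ y z, y ∈ S → 0 < w y z → z ∈ S) (hne : S.Nonempty) : S = Set.univ := by
  classical
  set g : V → ℝ := fun z => if z ∈ S then 1 else 0
  have hg : lapOf w *ᵥ g = 0 := by
    funext y
    rw [lapOf_mulVec_apply hw_diag, Pi.zero_apply]
    refine sum_eq_zero fun z _ => ?_
    rcases (hw_nonneg y z).eq_or_lt with hw | hw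
    · rw [← hw, zero_mul]
    · have hyz : y ∈ S ↔ z ∈ S :=
        ⟨fun hy => hS y z hy hw, fun hz => hS z y hz (hw_sym y z ▸ hw)⟩
      simp [g, hyz]
  obtain ⟨c, hc⟩ := hconn g hg
  obtain ⟨y, hy⟩ := hne
  refine Set.eq_univ_of_forall fun z => ?_
  have : g z = g y := (hc z).trans (hc y).symm
  by_contra hz
  simp [g, hy, hz] at this

theorem eq_of_forall_le_of_lapOf_mulVec_nonneg (hw_nonneg : ∀ u v, 0 ≤ w u v)
    (hw_diag : ∀ u, w u u = 0) {φ : V → ℝ} {y z : V} (hmin : ∀ z, φ y ≤ φ z)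
    (hy : 0 ≤ (lapOf w *ᵥ φ) y) (hw : 0 < w y z) : φ z = φ y := by
  have hterm : ∀ z ∈ univ, w y z * (φ y - φ z) ≤ 0 := fun z _ =>
    mul_nonpos_of_nonneg_of_nonpos (hw_nonneg y z) (sub_nonpos.mpr (hmin z))
  rw [lapOf_mulVec_apply hw_diag] at hy
  have hzero := (sum_eq_zero_iff_of_nonpos hterm).mp (le_antisymm (sum_nonpos hterm) hy) z
    (mem_univ z)
  have := (mul_eq_zero.mp hzero).resolve_left hw.ne'
  linarith

/-- Minimum principle: otherwise the minimizers of `φ` avoid `t`, so `L φ ≥ 0` on them, which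
forces them to be closed under edges, contradicting connectivity. -/
theorem potential_sink_le (hw_sym : ∀ u v, w u v = w v u) (hw_nonneg : ∀ u v, 0 ≤ w u v)
    (hw_diag : ∀ u, w u u = 0) (hconn : ∀ x : V → ℝ, lapOf w *ᵥ x = 0 → ∃ c, ∀ i, x i = c)
    {φ : V → ℝ} {s t : V} (hφ : lapOf w *ᵥ φ = unitDiff s t) (z : V) :
    φ t ≤ φ z := by
  obtain ⟨m, -, hm⟩ := exists_min_image univ φ ⟨t, mem_univ t⟩
  by_contra! hlt
  set S := {y | φ y = φ m}
  have ht : t ∉ S := fun h => (hm z (mem_univ z)).not_gt (h ▸ hlt)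
  have hclosed : ∀ y z, y ∈ S → 0 < w y z → z ∈ S := by
    intro y z hy hw
    have hyt : y ≠ t := fun h => ht (h ▸ hy)
    have hLy : 0 ≤ (lapOf w *ᵥ φ) y := by
      rw [hφ, unitDiff, Pi.sub_apply, Pi.single_apply, Pi.single_apply, if_neg hyt, sub_zero]
      split_ifs <;> norm_num
    have hmin : ∀ z, φ y ≤ φ z := fun z => (show φ y = φ m from hy) ▸ hm z (mem_univ z)
    exact (eq_of_forall_le_of_lapOf_mulVec_nonneg hw_nonneg hw_diag hmin hLy hw).trans hy
  have := eq_univ_of_nonempty_of_weight_closed hw_sym hw_nonneg hw_diag hconn hclosed ⟨m, rfl⟩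
  exact ht (this ▸ Set.mem_univ t)

theorem le_potential_source (hw_sym : ∀ u v, w u v = w v u) (hw_nonneg : ∀ u v, 0 ≤ w u v)
    (hw_diag : ∀ u, w u u = 0) (hconn : ∀ x : V → ℝ, lapOf w *ᵥ x = 0 → ∃ c, ∀ i, x i = c)
    {φ : V → ℝ} {s t : V} (hφ : lapOf w *ᵥ φ = unitDiff s t) (z : V) :
    φ z ≤ φ s := by
  have hnegφ : lapOf w *ᵥ (-φ) = unitDiff t s := by
    rw [mulVec_neg, hφ, unitDiff_swap, neg_neg]
  simpa using potential_sink_le hw_sym hw_nonneg hw_diag hconn hnegφ z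

end Laplacian

theorem IsMoorePenrose.mul_self_mul_eq {V : Type*} [Fintype V] {L Ld : Matrix V V ℝ}
    (h : IsMoorePenrose L Ld) (hL : L.IsSymm) : L * L * Ld = L := by
  have hT : (L * L * Ld)ᵀ = L := by
    rw [Matrix.mul_assoc, transpose_mul, h.2.2.1, hL.eq, h.1]
  rw [← transpose_transpose (L * L * Ld), hT, hL.eq]

section EffectiveResistance

variable {V : Type*} [Fintype V] [DecidableEq V]

theorem effRes_eq_unitDiff (Ld : Matrix V V ℝ) (u v : V) :
    effRes Ld u v = unitDiff u v ⬝ᵥ Ld *ᵥ unitDiff u v := rfl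

theorem effRes_comm (Ld : Matrix V V ℝ) (u v : V) : effRes Ld u v = effRes Ld v u := by
  rw [effRes_eq_unitDiff, effRes_eq_unitDiff, unitDiff_swap, mulVec_neg, neg_dotProduct,
    dotProduct_neg, neg_neg]

/-- `L Ld` is the orthogonal projection onto the range of `L`, the complement of the constants,
which contains `1_u − 1_v`. -/
theorem lapOf_mulVec_unitDiff {w : V → V → ℝ} (hw_sym : ∀ u v, w u v = w v u)
    (hw_diag : ∀ u, w u u = 0) (hconn : ∀ x : V → ℝ, lapOf w *ᵥ x = 0 → ∃ c, ∀ i, x i = c)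
    {Ld : Matrix V V ℝ} (hLd : IsMoorePenrose (lapOf w) Ld) (u v : V) :
    lapOf w *ᵥ (Ld *ᵥ unitDiff u v) = unitDiff u v := by
  set r := unitDiff u v - lapOf w *ᵥ (Ld *ᵥ unitDiff u v)
  have hr : lapOf w *ᵥ r = 0 := by
    rw [mulVec_sub, mulVec_mulVec, mulVec_mulVec, hLd.mul_self_mul_eq (lapOf_isSymm hw_sym),
      sub_self]
  have hsum : ∑ i, r i = 0 := by
    simp only [r, Pi.sub_apply, sum_sub_distrib, sum_unitDiff, sum_lapOf_mulVec hw_sym hw_diag,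
      sub_zero]
  obtain ⟨c, hc⟩ := hconn r hr
  have : Nonempty V := ⟨u⟩
  have hc0 : c = 0 := by
    simp only [hc, sum_const, card_univ, nsmul_eq_mul, mul_eq_zero, Nat.cast_eq_zero,
      Fintype.card_eq_zero_iff] at hsum
    exact hsum.resolve_left (not_isEmpty_of_nonempty V)
  funext i
  exact (sub_eq_zero.mp (hc0 ▸ hc i)).symm

theorem effRes_eq_dotProduct_mulVec {L Ld : Matrix V V ℝ} {u v : V}
    (hpot : L *ᵥ (Ld *ᵥ unitDiff u v) = unitDiff u v) :
    effRes Ld u v = Ld *ᵥ unitDiff u v ⬝ᵥ L *ᵥ (Ld *ᵥ unitDiff u v) := by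
  rw [effRes_eq_unitDiff, dotProduct_comm, hpot]

theorem effRes_nonneg {L Ld : Matrix V V ℝ} (hL : L.PosSemidef) {u v : V}
    (hpot : L *ᵥ (Ld *ᵥ unitDiff u v) = unitDiff u v) : 0 ≤ effRes Ld u v := by
  simpa [effRes_eq_dotProduct_mulVec hpot] using hL.dotProduct_mulVec_nonneg (Ld *ᵥ unitDiff u v)

theorem effRes_eq_zero_iff {L Ld : Matrix V V ℝ} (hL : L.PosSemidef) {u v : V}
    (hpot : L *ᵥ (Ld *ᵥ unitDiff u v) = unitDiff u v) : effRes Ld u v = 0 ↔ u = v := by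
  have := hL.dotProduct_mulVec_zero_iff (Ld *ᵥ unitDiff u v)
  rw [star_trivial, ← effRes_eq_dotProduct_mulVec hpot, hpot] at this
  rw [this, unitDiff_eq_zero_iff]

/-- The cross terms of `effRes Ld u x` are potential differences of unit currents
`v → x` and `u → v`, which are nonpositive by the maximum and minimum principles. -/
theorem effRes_le_add {w : V → V → ℝ} (hw_sym : ∀ u v, w u v = w v u)
    (hw_nonneg : ∀ u v, 0 ≤ w u v) (hw_diag : ∀ u, w u u = 0)
    (hconn : ∀ x : V → ℝ, lapOf w *ᵥ x = 0 → ∃ c, ∀ i, x i = c) {Ld : Matrix V V ℝ}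
    (hpot : ∀ u v, lapOf w *ᵥ (Ld *ᵥ unitDiff u v) = unitDiff u v) (u v x : V) :
    effRes Ld u x ≤ effRes Ld u v + effRes Ld v x := by
  have hsplit : effRes Ld u x = effRes Ld u v + (unitDiff u v ⬝ᵥ Ld *ᵥ unitDiff v x)
      + (unitDiff v x ⬝ᵥ Ld *ᵥ unitDiff u v) + effRes Ld v x := by
    simp only [effRes_eq_unitDiff, ← unitDiff_add_unitDiff u v x, mulVec_add, add_dotProduct,
      dotProduct_add]
    ring
  have hmax : unitDiff u v ⬝ᵥ Ld *ᵥ unitDiff v x ≤ 0 := by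
    rw [unitDiff_dotProduct, sub_nonpos]
    exact le_potential_source hw_sym hw_nonneg hw_diag hconn (hpot v x) u
  have hmin : unitDiff v x ⬝ᵥ Ld *ᵥ unitDiff u v ≤ 0 := by
    rw [unitDiff_dotProduct, sub_nonpos]
    exact potential_sink_le hw_sym hw_nonneg hw_diag hconn (hpot u v) x
  linarith

end EffectiveResistance

/-- Effective resistance is a metric on the vertices of a finite connected weighted graph:
nonnegative, zero iff the vertices coincide, symmetric, and satisfying the triangle
inequality.  Connectivity is expressed by the kernel of the Laplacian consisting exactly
of the constant vectors. -/
theorem effRes_is_metric {V : Type*} [Fintype V] [DecidableEq V]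
    (w : V → V → ℝ) (hw_sym : ∀ u v, w u v = w v u)
    (hw_nonneg : ∀ u v, 0 ≤ w u v) (hw_diag : ∀ u, w u u = 0)
    (hconn : ∀ x : V → ℝ, (lapOf w).mulVec x = 0 → ∃ c, ∀ i, x i = c)
    (Ld : Matrix V V ℝ) (hLd : IsMoorePenrose (lapOf w) Ld) :
    (∀ u v, 0 ≤ effRes Ld u v) ∧
    (∀ u v, effRes Ld u v = 0 ↔ u = v) ∧
    (∀ u v, effRes Ld u v = effRes Ld v u) ∧
    (∀ u v x, effRes Ld u x ≤ effRes Ld u v + effRes Ld v x) := by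
  have hL := posSemidef_lapOf hw_sym hw_nonneg hw_diag
  have hpot := lapOf_mulVec_unitDiff hw_sym hw_diag hconn hLd
  exact ⟨fun u v => effRes_nonneg hL (hpot u v), fun u v => effRes_eq_zero_iff hL (hpot u v),
    effRes_comm Ld, effRes_le_add hw_sym hw_nonneg hw_diag hconn hpot⟩
end

section
/- Eliminating vertices preserves effective resistance: for any finite connected weighted graph G, any subset T of vertices, and any pair u, v ∈ T, the effective resistance between u and v in G equals the effective resistance between u and v computed with respect to the Schur complement of the Laplacian of G onto T. -/
open Matrix Finset

/-- The Schur complement of `L` onto the vertex set `T`: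
`L_TT − L_TF L_FF⁻¹ L_FT`, where `F = V ∖ T`. -/
noncomputable def schurOnto {V : Type*} [Fintype V] [DecidableEq V]
    (L : Matrix V V ℝ) (T : Set V) [DecidablePred (· ∈ T)] :
    Matrix {a // a ∈ T} {a // a ∈ T} ℝ :=
  L.toBlock (· ∈ T) (· ∈ T) -
    L.toBlock (· ∈ T) (¬ · ∈ T) * (L.toBlock (¬ · ∈ T) (¬ · ∈ T))⁻¹ *
      L.toBlock (¬ · ∈ T) (· ∈ T)

section helpers
variable {W : Type*} [Fintype W]

lemma pinv_solve (L Ld : Matrix W W ℝ) (hL : Lᵀ = L) (hMP : IsMoorePenrose L Ld)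
    (hker : ∀ x : W → ℝ, L.mulVec x = 0 → ∃ c, ∀ i, x i = c)
    (b : W → ℝ) (hb : ∑ i, b i = 0) : L.mulVec (Ld.mulVec b) = b := by
  obtain ⟨h1, _h2, h3, _h4⟩ := hMP
  set P := L * Ld with hP
  have hPP : P * P = P := by
    conv_lhs => rw [hP]
    rw [← Matrix.mul_assoc, h1, ← hP]
  have hLP : L * P = L := by
    calc L * P = (P * L)ᵀ := by rw [Matrix.transpose_mul, hL, h3]
    _ = L := by rw [h1, hL]
  set vv : W → ℝ := b - P.mulVec b with hvv
  have hLv : L.mulVec vv = 0 := by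
    rw [hvv, Matrix.mulVec_sub, Matrix.mulVec_mulVec, hLP, sub_self]
  have hPv : P.mulVec vv = 0 := by
    rw [hvv, Matrix.mulVec_sub, Matrix.mulVec_mulVec, hPP, sub_self]
  obtain ⟨c, hc⟩ := hker vv hLv
  have hvb : vv ⬝ᵥ b = 0 := by
    have : vv ⬝ᵥ b = c * ∑ i, b i := by
      simp only [dotProduct, Finset.mul_sum]
      exact Finset.sum_congr rfl fun i _ => by rw [hc i]
    rw [this, hb, mul_zero]
  have hvPb : vv ⬝ᵥ P.mulVec b = 0 := by
    rw [Matrix.dotProduct_mulVec, ← Matrix.mulVec_transpose, h3, hPv]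
    simp
  have hvz : vv = 0 := by
    have hdot : vv ⬝ᵥ vv = 0 := by
      have : vv ⬝ᵥ vv = vv ⬝ᵥ b - vv ⬝ᵥ P.mulVec b := by
        rw [← dotProduct_sub]
      rw [this, hvb, hvPb, sub_zero]
    funext i
    have := (Finset.sum_eq_zero_iff_of_nonneg
      (fun j _ => mul_self_nonneg (vv j))).mp hdot i (Finset.mem_univ i)
    exact mul_self_eq_zero.mp this
  rw [hvv] at hvz
  rw [Matrix.mulVec_mulVec, ← hP]
  exact (sub_eq_zero.mp hvz).symm

lemma dot_unique (L : Matrix W W ℝ)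
    (hker : ∀ x : W → ℝ, L.mulVec x = 0 → ∃ c, ∀ i, x i = c)
    (b x x' : W → ℝ) (hb : ∑ i, b i = 0)
    (hx : L.mulVec x = b) (hx' : L.mulVec x' = b) : b ⬝ᵥ x = b ⬝ᵥ x' := by
  have hk : L.mulVec (x - x') = 0 := by rw [Matrix.mulVec_sub, hx, hx', sub_self]
  obtain ⟨c, hc⟩ := hker _ hk
  have : b ⬝ᵥ (x - x') = 0 := by
    have h1 : b ⬝ᵥ (x - x') = (∑ i, b i) * c := by
      simp only [dotProduct, Finset.sum_mul]
      exact Finset.sum_congr rfl fun i _ => by rw [hc i]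
    rw [h1, hb, zero_mul]
  rw [dotProduct_sub] at this
  linarith

end helpers

/-- Eliminating vertices preserves effective resistance: for a finite connected weighted
graph `G`, a subset `T` of vertices and `u, v ∈ T`, the effective resistance between `u`
and `v` in `G` equals the effective resistance computed with respect to the Schur
complement of the Laplacian of `G` onto `T`. -/
theorem schur_preserves_effRes {V : Type*} [Fintype V] [DecidableEq V]
    (w : V → V → ℝ) (hw_sym : ∀ u v, w u v = w v u)
    (hw_nonneg : ∀ u v, 0 ≤ w u v) (hw_diag : ∀ u, w u u = 0)
    (hconn : ∀ x : V → ℝ, (lapOf w).mulVec x = 0 → ∃ c, ∀ i, x i = c)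
    (T : Set V) [DecidablePred (· ∈ T)]
    (hFF : IsUnit ((lapOf w).toBlock (¬ · ∈ T) (¬ · ∈ T)))
    (Ld : Matrix V V ℝ) (hLd : IsMoorePenrose (lapOf w) Ld)
    (Sd : Matrix {a // a ∈ T} {a // a ∈ T} ℝ)
    (hSd : IsMoorePenrose (schurOnto (lapOf w) T) Sd)
    (u v : V) (hu : u ∈ T) (hv : v ∈ T) :
    effRes Ld u v = effRes Sd ⟨u, hu⟩ ⟨v, hv⟩ := by
  classical
  set L := lapOf w with hLdef
  set A := L.toBlock (· ∈ T) (· ∈ T) with hA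
  set B := L.toBlock (· ∈ T) (¬ · ∈ T) with hB
  set C := L.toBlock (¬ · ∈ T) (· ∈ T) with hC
  set D := L.toBlock (¬ · ∈ T) (¬ · ∈ T) with hD
  have hS : schurOnto L T = A - B * D⁻¹ * C := rfl
  have hDdet : IsUnit D.det := (Matrix.isUnit_iff_isUnit_det D).mp hFF
  have hD1 : D * D⁻¹ = 1 := Matrix.mul_nonsing_inv D hDdet
  have hD2 : D⁻¹ * D = 1 := Matrix.nonsing_inv_mul D hDdet
  -- symmetry of L
  have hLs : ∀ a b, L a b = L b a := by
    intro a b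
    by_cases h : a = b
    · subst h; rfl
    · show (if a = b then _ else -(w a b)) = (if b = a then _ else -(w b a))
      rw [if_neg h, if_neg (fun hh => h hh.symm), hw_sym]
  have hLsym : Lᵀ = L := by
    ext i j; exact hLs j i
  -- transposes of blocks
  have hblockT : ∀ (p q : V → Prop) [DecidablePred p] [DecidablePred q],
      (L.toBlock p q)ᵀ = L.toBlock q p := by
    intro p q _ _
    ext i j
    exact hLs (↑j) (↑i)
  -- row expansion
  have hrow : ∀ (x : V → ℝ) (i : V),
      L.mulVec x i = (∑ j : {a // a ∈ T}, L i ↑j * x ↑j)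
        + ∑ j : {a // ¬ a ∈ T}, L i ↑j * x ↑j :=
    fun x i => (Fintype.sum_subtype_add_sum_subtype _ fun j => L i j * x j).symm
  -- key forward lemma
  have key : ∀ (x bb : V → ℝ), L.mulVec x = bb → (∀ i, i ∉ T → bb i = 0) →
      (schurOnto L T).mulVec (fun i : {a // a ∈ T} => x ↑i) = (fun i : {a // a ∈ T} => bb ↑i) := by
    intro x bb hx h0
    set y : {a // a ∈ T} → ℝ := fun i => x ↑i with hy
    set z : {a // ¬ a ∈ T} → ℝ := fun i => x ↑i with hzdef
    have hF : C.mulVec y + D.mulVec z = 0 := by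
      funext i
      have h := congrFun hx ↑i
      rw [hrow x ↑i, h0 _ i.2] at h
      show C.mulVec y i + D.mulVec z i = 0
      exact h
    have hDz : D.mulVec z = -(C.mulVec y) := by
      rw [add_comm] at hF
      exact eq_neg_of_add_eq_zero_left hF
    have hz : z = -((D⁻¹ * C).mulVec y) := by
      calc z = (D⁻¹ * D).mulVec z := by rw [hD2, Matrix.one_mulVec]
      _ = D⁻¹.mulVec (D.mulVec z) := by rw [← Matrix.mulVec_mulVec]
      _ = -((D⁻¹ * C).mulVec y) := by rw [hDz, Matrix.mulVec_neg, Matrix.mulVec_mulVec]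
    funext i
    have hT : A.mulVec y i + B.mulVec z i = bb ↑i := by
      have h := congrFun hx ↑i
      rw [hrow x ↑i] at h
      exact h
    have hBz : B.mulVec z = -((B * D⁻¹ * C).mulVec y) := by
      rw [hz, Matrix.mulVec_neg, Matrix.mulVec_mulVec, ← Matrix.mul_assoc]
    calc (schurOnto L T).mulVec y i
        = A.mulVec y i - (B * D⁻¹ * C).mulVec y i := by
          rw [hS, Matrix.sub_mulVec]; rfl
      _ = A.mulVec y i + B.mulVec z i := by rw [hBz, Pi.neg_apply]; ring
      _ = bb ↑i := hT
  -- kernel of Schur complement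
  have hSconn : ∀ y : {a // a ∈ T} → ℝ, (schurOnto L T).mulVec y = 0 →
      ∃ c, ∀ i, y i = c := by
    intro y hy
    set z : {a // ¬ a ∈ T} → ℝ := -((D⁻¹ * C).mulVec y) with hzdef
    set xx : V → ℝ := fun i => if h : i ∈ T then y ⟨i, h⟩ else z ⟨i, h⟩ with hxx
    have hxT : ∀ j : {a // a ∈ T}, xx ↑j = y j := by
      intro j; simp only [hxx, j.2, dif_pos, Subtype.coe_eta]
    have hxF : ∀ j : {a // ¬ a ∈ T}, xx ↑j = z j := by
      intro j; simp only [hxx, j.2, dif_neg, not_false_iff, Subtype.coe_eta]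
    have hLx : L.mulVec xx = 0 := by
      funext i
      rw [hrow]
      by_cases h : i ∈ T
      · have e1 : (∑ j : {a // a ∈ T}, L i ↑j * xx ↑j) = A.mulVec y ⟨i, h⟩ := by
          apply Finset.sum_congr rfl; intro j _; rw [hxT j]; rfl
        have e2 : (∑ j : {a // ¬ a ∈ T}, L i ↑j * xx ↑j) = B.mulVec z ⟨i, h⟩ := by
          apply Finset.sum_congr rfl; intro j _; rw [hxF j]; rfl
        have hBz : B.mulVec z = -((B * D⁻¹ * C).mulVec y) := by
          rw [hzdef, Matrix.mulVec_neg, Matrix.mulVec_mulVec, ← Matrix.mul_assoc]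
        have hSy : A.mulVec y ⟨i, h⟩ - (B * D⁻¹ * C).mulVec y ⟨i, h⟩ = 0 := by
          have h' := congrFun hy ⟨i, h⟩
          rw [hS, Matrix.sub_mulVec] at h'
          exact h'
        rw [e1, e2, hBz, Pi.neg_apply, Pi.zero_apply]
        linarith
      · have e1 : (∑ j : {a // a ∈ T}, L i ↑j * xx ↑j) = C.mulVec y ⟨i, h⟩ := by
          apply Finset.sum_congr rfl; intro j _; rw [hxT j]; rfl
        have e2 : (∑ j : {a // ¬ a ∈ T}, L i ↑j * xx ↑j) = D.mulVec z ⟨i, h⟩ := by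
          apply Finset.sum_congr rfl; intro j _; rw [hxF j]; rfl
        have hDz : D.mulVec z = -(C.mulVec y) := by
          rw [hzdef, Matrix.mulVec_neg, Matrix.mulVec_mulVec, ← Matrix.mul_assoc, hD1,
            Matrix.one_mul]
        rw [e1, e2, hDz, Pi.neg_apply, Pi.zero_apply]
        ring
    obtain ⟨c, hc⟩ := hconn xx hLx
    exact ⟨c, fun i => by rw [← hxT i]; exact hc ↑i⟩
  -- symmetry of Schur complement
  have hSsym : (schurOnto L T)ᵀ = schurOnto L T := by
    have hAT : Aᵀ = A := hblockT _ _
    have hBT : Bᵀ = C := hblockT _ _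
    have hCT : Cᵀ = B := hblockT _ _
    have hDT : Dᵀ = D := hblockT _ _
    rw [hS, Matrix.transpose_sub, Matrix.transpose_mul, Matrix.transpose_mul,
      Matrix.transpose_nonsing_inv, hAT, hBT, hCT, hDT, Matrix.mul_assoc]
  -- the vectors
  simp only [effRes]
  set b : V → ℝ := Pi.single u (1 : ℝ) - Pi.single v 1 with hbdef
  set bT : {a // a ∈ T} → ℝ :=
    Pi.single (⟨u, hu⟩ : {a // a ∈ T}) (1 : ℝ) - Pi.single ⟨v, hv⟩ 1 with hbTdef
  have hbT : ∀ i : {a // a ∈ T}, bT i = b ↑i := by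
    intro i
    simp [hbdef, hbTdef, Pi.single_apply, Subtype.ext_iff]
  have hb0 : ∀ i, i ∉ T → b i = 0 := by
    intro i hi
    have h1 : i ≠ u := fun h => hi (h ▸ hu)
    have h2 : i ≠ v := fun h => hi (h ▸ hv)
    simp [hbdef, Pi.single_eq_of_ne h1, Pi.single_eq_of_ne h2]
  have hbsum : ∑ i, b i = 0 := by
    simp [hbdef, Finset.sum_sub_distrib, Pi.single_apply]
  have hbTsum : ∑ i, bT i = 0 := by
    simp [hbTdef, Finset.sum_sub_distrib, Pi.single_apply]
  set x : V → ℝ := Ld.mulVec b with hxdef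
  have hx : L.mulVec x = b := pinv_solve L Ld hLsym hLd hconn b hbsum
  have hkey : (schurOnto L T).mulVec (fun i : {a // a ∈ T} => x ↑i) = bT := by
    rw [key x b hx hb0]
    funext i
    exact (hbT i).symm
  have hx' : (schurOnto L T).mulVec (Sd.mulVec bT) = bT :=
    pinv_solve _ Sd hSsym hSd hSconn bT hbTsum
  have hdu : bT ⬝ᵥ Sd.mulVec bT = bT ⬝ᵥ (fun i : {a // a ∈ T} => x ↑i) :=
    dot_unique (schurOnto L T) hSconn bT _ _ hbTsum hx' hkey
  calc b ⬝ᵥ x = ∑ i, b i * x i := rfl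
    _ = (∑ i : {a // a ∈ T}, b ↑i * x ↑i) + ∑ i : {a // ¬ a ∈ T}, b ↑i * x ↑i :=
      (Fintype.sum_subtype_add_sum_subtype _ fun i => b i * x i).symm
    _ = ∑ i : {a // a ∈ T}, bT i * x ↑i := by
      rw [show (∑ i : {a // ¬ a ∈ T}, b ↑i * x ↑i) = 0 from
        Finset.sum_eq_zero fun i _ => by rw [hb0 ↑i i.2, zero_mul], add_zero]
      exact Finset.sum_congr rfl fun i _ => by rw [hbT i]
    _ = bT ⬝ᵥ (fun i : {a // a ∈ T} => x ↑i) := rfl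
    _ = bT ⬝ᵥ Sd.mulVec bT := hdu.symm
end
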